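/- arXiv:1408.1492 — 4 statements merged into one kernel-verified Lean document; each statement's English description precedes it below -/
import Mathlib

section
/- Define the remaining-capacity function rem : ℝ → List ℝ → ℝ by rem c [] = c and rem c (d :: l) = rem (c − min c d) l, modeling strict priority queueing (SPQ): starting from router capacity c, each buyer in priority order consumes min of the remaining capacity and her demand. Then for every c ≥ 0, every list l of nonnegative demands, and every sublist l' of l, one has rem c l' ≥ rem c l, and moreover rem c l ≥ 0. (In particular, under SPQ the capacity available to a buyer weakly increases when the set of higher-priority buyers shrinks, i.e., when her bid and hence her priority increases.) -/
/-- Remaining capacity after serving a list of demands in priority order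
    under strict priority queueing (SPQ). -/
def rem (c : ℝ) : List ℝ → ℝ
  | [] => c
  | d :: l => rem (c - min c d) l

/-
Serving a demand `d` maps the capacity `c` to `max (c - d) 0`, a monotone map which, for
`c, d ≥ 0`, stays nonnegative and does not exceed `c`. Hence `rem · l` is monotone and
nonnegative on `[0, ∞)`, and deleting a demand from the list can only raise the capacity
passed on to the rest of the queue.
-/

theorem rem_cons (c d : ℝ) (l : List ℝ) : rem c (d :: l) = rem (max (c - d) 0) l := by
  rw [rem, ← max_sub_sub_left, sub_self, max_comm]

theorem rem_nonneg {c : ℝ} (hc : 0 ≤ c) : ∀ l : List ℝ, 0 ≤ rem c l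
  | [] => hc
  | d :: l => by
    rw [rem_cons]
    exact rem_nonneg (le_max_right _ _) l

theorem rem_monotone : ∀ l : List ℝ, Monotone (rem · l)
  | [] => fun _ _ h => h
  | d :: l => fun c c' h => by
    simp only [rem_cons]
    exact rem_monotone l (max_le_max_right 0 (sub_le_sub_right h d))

theorem rem_cons_le {c d : ℝ} (hc : 0 ≤ c) (hd : 0 ≤ d) (l : List ℝ) :
    rem c (d :: l) ≤ rem c l := by
  rw [rem_cons]
  exact rem_monotone l (max_le (by linarith) hc)

theorem rem_le_rem_of_sublist {l' l : List ℝ} (h : l'.Sublist l) (hl : ∀ d ∈ l, 0 ≤ d)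
    {c : ℝ} (hc : 0 ≤ c) : rem c l ≤ rem c l' := by
  induction h generalizing c with
  | slnil => exact le_rfl
  | cons d _ ih =>
    exact (rem_cons_le hc (hl d List.mem_cons_self) _).trans
      (ih (fun x hx => hl x (List.mem_cons_of_mem d hx)) hc)
  | cons_cons d _ ih =>
    rw [rem_cons, rem_cons]
    exact ih (fun x hx => hl x (List.mem_cons_of_mem d hx)) (le_max_right _ _)

/-- For nonnegative capacity and nonnegative demands, the remaining capacity
under SPQ weakly increases when the list of higher-priority demands shrinks
to a sublist, and remaining capacity is always nonnegative. -/
theorem rem_sublist_ge_and_nonneg (c : ℝ) (hc : 0 ≤ c)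
    (l : List ℝ) (hl : ∀ d ∈ l, 0 ≤ d)
    (l' : List ℝ) (hl' : l'.Sublist l) :
    rem c l' ≥ rem c l ∧ rem c l ≥ 0 :=
  ⟨rem_le_rem_of_sublist hl' hl hc, rem_nonneg hc l⟩
end

section
/- Let c : ℕ → ℝ be a sequence of nonnegative per-epoch capacities and let d : ℕ → ℝ → ℝ be a natural demand realization. Define the greedy cumulative consumption G : ℕ → ℝ by G 0 = 0 and G (t+1) = G t + min (c t) (d t (G t)). Let F : ℕ → ℝ be any feasible cumulative consumption, i.e., F 0 = 0 and F (t+1) = F t + f t for some f t with 0 ≤ f t ≤ min (c t) (d t (F t)). Then F t ≤ G t for all t. (Greedy use of the channel maximizes the total amount of network capacity used by the buyer up to every epoch.) -/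
/-- A demand realization `d` is natural if for all epochs `t`, all `x' ≤ x`
and all capacities `k ≥ 0`, `x' + min(k, d t x') ≤ x + min(k, d t x)`. -/
def NaturalDemand (d : ℕ → ℝ → ℝ) : Prop :=
  ∀ t : ℕ, ∀ x x' k : ℝ, x' ≤ x → 0 ≤ k →
    x' + min k (d t x') ≤ x + min k (d t x)

/-- Greedy use of the channel maximizes cumulative consumption up to every
epoch, for any natural demand realization. -/
theorem greedy_maximizes (c : ℕ → ℝ) (hc : ∀ t, 0 ≤ c t)
    (d : ℕ → ℝ → ℝ) (hd : NaturalDemand d)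
    (G F f : ℕ → ℝ)
    (hG0 : G 0 = 0) (hG : ∀ t, G (t + 1) = G t + min (c t) (d t (G t)))
    (hF0 : F 0 = 0) (hF : ∀ t, F (t + 1) = F t + f t)
    (hf : ∀ t, 0 ≤ f t ∧ f t ≤ min (c t) (d t (F t))) :
    ∀ t, F t ≤ G t := by
  intro t
  induction t with
  | zero => rw [hF0, hG0]
  | succ t ih =>
    rw [hF t, hG t]
    calc F t + f t ≤ F t + min (c t) (d t (F t)) := by
          linarith [(hf t).2]
      _ ≤ G t + min (c t) (d t (G t)) := hd t (G t) (F t) (c t) ih (hc t)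
end

section
/- Let d : ℕ → ℝ → ℝ be a natural demand realization, and let c, c' : ℕ → ℝ be two sequences of per-epoch capacities with 0 ≤ c' t ≤ c t for all t. Define greedy cumulative consumptions G and G' by G 0 = G' 0 = 0, G (t+1) = G t + min (c t) (d t (G t)), and G' (t+1) = G' t + min (c' t) (d t (G' t)). Then G' t ≤ G t for all t. (Since under SPQ a higher bid yields pointwise weakly larger per-epoch capacities, a greedy buyer's cumulative allocation up to any epoch is ex post monotone in her bid.) -/
/-- With a natural demand realization, a greedy buyer's cumulative
consumption up to any epoch weakly increases when per-epoch capacities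
increase pointwise (ex post monotonicity in the bid under SPQ). -/
theorem greedy_monotone_in_capacity (d : ℕ → ℝ → ℝ) (hd : NaturalDemand d)
    (c c' : ℕ → ℝ) (hc : ∀ t, 0 ≤ c' t ∧ c' t ≤ c t)
    (G G' : ℕ → ℝ)
    (hG0 : G 0 = 0) (hG : ∀ t, G (t + 1) = G t + min (c t) (d t (G t)))
    (hG'0 : G' 0 = 0) (hG' : ∀ t, G' (t + 1) = G' t + min (c' t) (d t (G' t))) :
    ∀ t, G' t ≤ G t := by
  intro t
  induction t with
  | zero => rw [hG0, hG'0]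
  | succ t ih =>
    rw [hG, hG']
    have hk : (0:ℝ) ≤ c t := le_trans (hc t).1 (hc t).2
    calc G' t + min (c' t) (d t (G' t))
        ≤ G' t + min (c t) (d t (G' t)) := by
          gcongr
          exact (hc t).2
      _ ≤ G t + min (c t) (d t (G t)) := hd t _ _ _ ih hk
end

section
/- Let O > 0 (the total credit of the other sellers in the pool) and δ ≥ 0 (the deficit of the other pool), and let 0 ≤ R₁ < R₂ be two possible revenues of a given seller. If δ ≤ R₁ + O (i.e., the tax rate is weakly less than one at the lower revenue), then R₂ · (1 − δ/(R₂ + O)) > R₁ · (1 − δ/(R₁ + O)). (A seller's post-tax payoff in ALIGN-TRUST is strictly increasing in his own pre-tax revenue, so the seller strictly prefers to allocate to maximize total value at the perturbed bids.) -/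
/-- A seller's post-tax payoff in ALIGN-TRUST is strictly increasing in his
own pre-tax revenue: with `O > 0` the credit of the other sellers in the
pool, `δ ≥ 0` the deficit of the other pool, and revenues `0 ≤ R₁ < R₂`,
if the tax rate is weakly less than one at the lower revenue, then the
post-tax payoff at `R₂` strictly exceeds that at `R₁`. -/
theorem align_trust_payoff_increasing (O δ R₁ R₂ : ℝ)
    (hO : 0 < O) (hδ : 0 ≤ δ) (hR₁ : 0 ≤ R₁) (hR : R₁ < R₂)
    (htax : δ ≤ R₁ + O) :
    R₂ * (1 - δ / (R₂ + O)) > R₁ * (1 - δ / (R₁ + O)) := by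
  have h1 : 0 < R₁ + O := by linarith
  have h2 : 0 < R₂ + O := by linarith
  have e1 : δ / (R₁ + O) = δ / (R₁ + O) := rfl
  rw [gt_iff_lt, ← sub_pos]
  have : R₂ * (1 - δ / (R₂ + O)) - R₁ * (1 - δ / (R₁ + O))
      = ((R₂ - R₁) * ((R₁ + O) * (R₂ + O) - δ * O)) / ((R₁ + O) * (R₂ + O)) := by
    field_simp
    ring
  rw [this]
  apply div_pos
  · apply mul_pos (by linarith)
    nlinarith
  · exact mul_pos h1 h2
end
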